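/- If M_2 has no loops, then every spanning set of D(M_1,M_2) is a spanning set of M_1. -/
import Mathlib


open Finset

/-- A matroid on the ground set `Fin n`, presented by its rank function. -/
structure FinMatroid (n : ℕ) where
  rank : Finset (Fin n) → ℕ
  rank_empty : rank ∅ = 0
  rank_le_card : ∀ S : Finset (Fin n), rank S ≤ S.card
  rank_mono : ∀ ⦃S T : Finset (Fin n)⦄, S ⊆ T → rank S ≤ rank T
  rank_submod : ∀ S T : Finset (Fin n),
    rank (S ∪ T) + rank (S ∩ T) ≤ rank S + rank T

namespace FinMatroid

variable {n : ℕ}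

/-- A set is independent if its rank equals its cardinality. -/
def Indep (M : FinMatroid n) (I : Finset (Fin n)) : Prop := M.rank I = I.card

/-- The rank of the matroid (rank of the full ground set). -/
def rk (M : FinMatroid n) : ℕ := M.rank Finset.univ

/-- A matroid is loopless if every singleton has positive rank. -/
def Loopless (M : FinMatroid n) : Prop := ∀ i : Fin n, 0 < M.rank {i}

/-- Two matroids on `[n]` have no common loops. -/
def NoCommonLoops (M₁ M₂ : FinMatroid n) : Prop :=
  ∀ i : Fin n, 0 < M₁.rank {i} ∨ 0 < M₂.rank {i}

/-- A valid family for the Dilworth minimum: pairwise disjoint nonempty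
subsets of `S`. -/
def ValidFamily (S : Finset (Fin n)) (𝒯 : Finset (Finset (Fin n))) : Prop :=
  (∀ T ∈ 𝒯, T ⊆ S ∧ T.Nonempty) ∧
    ∀ T ∈ 𝒯, ∀ T' ∈ 𝒯, T ≠ T' → Disjoint T T'

/-- The value `Σ_i (rank_{M₁}(T_i) + rank_{M₂}(T_i) − 1) + |S \ ∪ T_i|`
associated to a family. -/
def famValue (M₁ M₂ : FinMatroid n) (S : Finset (Fin n))
    (𝒯 : Finset (Finset (Fin n))) : ℕ :=
  (∑ T ∈ 𝒯, (M₁.rank T + M₂.rank T - 1)) + (S \ 𝒯.sup id).card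

/-- The rank function of the diagonal Dilworth truncation `D(M₁,M₂)`. -/
noncomputable def rankD (M₁ M₂ : FinMatroid n) (S : Finset (Fin n)) : ℕ :=
  sInf {v : ℕ | ∃ 𝒯 : Finset (Finset (Fin n)),
    ValidFamily S 𝒯 ∧ v = famValue M₁ M₂ S 𝒯}

/-- Independence in the diagonal Dilworth truncation. -/
def IndepD (M₁ M₂ : FinMatroid n) (I : Finset (Fin n)) : Prop :=
  rankD M₁ M₂ I = I.card

/-- Circuits of the diagonal Dilworth truncation: minimal dependent sets. -/
def CircuitD (M₁ M₂ : FinMatroid n) (C : Finset (Fin n)) : Prop :=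
  ¬ IndepD M₁ M₂ C ∧ ∀ C' : Finset (Fin n), C' ⊂ C → IndepD M₁ M₂ C'

end FinMatroid


open Finset FinMatroid

section Aux
variable {n : ℕ} (M₁ M₂ : FinMatroid n)

lemma validFamily_empty (S : Finset (Fin n)) :
    ValidFamily S (∅ : Finset (Finset (Fin n))) :=
  ⟨fun T hT => absurd hT (Finset.notMem_empty T),
   fun T hT => absurd hT (Finset.notMem_empty T)⟩

lemma rankD_le (S : Finset (Fin n)) {𝒯 : Finset (Finset (Fin n))}
    (h : ValidFamily S 𝒯) : rankD M₁ M₂ S ≤ famValue M₁ M₂ S 𝒯 :=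
  Nat.sInf_le ⟨𝒯, h, rfl⟩

lemma exists_opt (S : Finset (Fin n)) :
    ∃ 𝒯, ValidFamily S 𝒯 ∧ rankD M₁ M₂ S = famValue M₁ M₂ S 𝒯 := by
  have hne : {v : ℕ | ∃ 𝒯, ValidFamily S 𝒯 ∧ v = famValue M₁ M₂ S 𝒯}.Nonempty :=
    ⟨famValue M₁ M₂ S ∅, ∅, validFamily_empty S, rfl⟩
  exact Nat.sInf_mem hne

lemma rank_insert_ge (M : FinMatroid n) {S A : Finset (Fin n)} {e : Fin n}
    (hA : A ⊆ S) (he : e ∉ S) (h : M.rank S < M.rank (insert e S)) :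
    M.rank A + 1 ≤ M.rank (insert e A) := by
  have hsub := M.rank_submod (insert e A) S
  have h1 : insert e A ∪ S = insert e S := by
    ext x; simp only [Finset.mem_union, Finset.mem_insert]
    constructor
    · rintro (⟨rfl | hx⟩ | hx)
      · exact Or.inl rfl
      · exact Or.inr (hA hx)
      · exact Or.inr hx
    · rintro (rfl | hx)
      · exact Or.inl (Or.inl rfl)
      · exact Or.inr hx
  have h2 : insert e A ∩ S = A := by
    ext x; simp only [Finset.mem_inter, Finset.mem_insert]
    constructor
    · rintro ⟨rfl | hx, hxS⟩
      · exact absurd hxS he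
      · exact hx
    · exact fun hx => ⟨Or.inr hx, hA hx⟩
  rw [h1, h2] at hsub
  omega

lemma exists_insert_rank_lt (M : FinMatroid n) (S : Finset (Fin n))
    (h : M.rank S < M.rank Finset.univ) :
    ∃ e, e ∉ S ∧ M.rank S < M.rank (insert e S) := by
  by_contra hc
  push_neg at hc
  have hall : ∀ e : Fin n, M.rank (insert e S) ≤ M.rank S := by
    intro e
    by_cases heS : e ∈ S
    · rw [Finset.insert_eq_self.mpr heS]
    · exact hc e heS
  have key : ∀ T : Finset (Fin n), M.rank (S ∪ T) ≤ M.rank S := by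
    intro T
    induction T using Finset.induction with
    | empty => simp
    | @insert a T ha ih =>
      have hsub := M.rank_submod (insert a S) (S ∪ T)
      have h1 : insert a S ∪ (S ∪ T) = S ∪ insert a T := by
        ext x; simp only [Finset.mem_union, Finset.mem_insert]; tauto
      have h2 : S ⊆ insert a S ∩ (S ∪ T) := by
        intro x hx
        simp only [Finset.mem_inter, Finset.mem_insert, Finset.mem_union]
        exact ⟨Or.inr hx, Or.inl hx⟩
      have h3 := M.rank_mono h2
      have h4 := hall a
      rw [h1] at hsub
      omega
  have := key Finset.univ
  rw [Finset.union_eq_right.mpr (Finset.subset_univ S)] at this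
  omega

lemma rankD_mono {S U : Finset (Fin n)} (hSU : S ⊆ U) :
    rankD M₁ M₂ S ≤ rankD M₁ M₂ U := by
  obtain ⟨𝒯, hval, heq⟩ := exists_opt M₁ M₂ U
  rw [heq]
  set ℱ : Finset (Finset (Fin n)) := 𝒯.filter (fun T => (T ∩ S).Nonempty) with hℱ
  have hℱsub : ℱ ⊆ 𝒯 := Finset.filter_subset _ _
  set 𝒯' : Finset (Finset (Fin n)) := ℱ.image (· ∩ S) with h𝒯'
  have hinj : Set.InjOn (· ∩ S) ℱ := by
    intro T hT T' hT' hTT'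
    by_contra hne
    have hd := hval.2 T (hℱsub hT) T' (hℱsub hT') hne
    have hne2 : (T ∩ S).Nonempty := (Finset.mem_filter.mp hT).2
    obtain ⟨x, hx⟩ := hne2
    have hx' : x ∈ T' ∩ S := by rw [← show T ∩ S = T' ∩ S from hTT']; exact hx
    exact (Finset.disjoint_left.mp hd (Finset.mem_inter.mp hx).1)
      (Finset.mem_inter.mp hx').1
  have hvalid : ValidFamily S 𝒯' := by
    constructor
    · intro A hA
      obtain ⟨T, hT, rfl⟩ := Finset.mem_image.mp hA
      exact ⟨Finset.inter_subset_right, (Finset.mem_filter.mp hT).2⟩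
    · intro A hA B hB hAB
      obtain ⟨T, hT, rfl⟩ := Finset.mem_image.mp hA
      obtain ⟨T', hT', rfl⟩ := Finset.mem_image.mp hB
      have hne : T ≠ T' := fun h => hAB (by rw [h])
      exact Finset.disjoint_of_subset_left Finset.inter_subset_left
        (Finset.disjoint_of_subset_right Finset.inter_subset_left
          (hval.2 T (hℱsub hT) T' (hℱsub hT') hne))
  refine le_trans (rankD_le M₁ M₂ S hvalid) ?_
  unfold famValue
  have hsum : ∑ A ∈ 𝒯', (M₁.rank A + M₂.rank A - 1) ≤
      ∑ T ∈ 𝒯, (M₁.rank T + M₂.rank T - 1) := by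
    rw [h𝒯', Finset.sum_image hinj]
    refine le_trans (Finset.sum_le_sum ?_) (Finset.sum_le_sum_of_subset hℱsub)
    intro T hT
    have h1 := M₁.rank_mono (Finset.inter_subset_left : T ∩ S ⊆ T)
    have h2 := M₂.rank_mono (Finset.inter_subset_left : T ∩ S ⊆ T)
    omega
  have hcard : (S \ 𝒯'.sup id).card ≤ (U \ 𝒯.sup id).card := by
    refine Finset.card_le_card ?_
    intro x hx
    rw [Finset.mem_sdiff] at hx ⊢
    refine ⟨hSU hx.1, fun hmem => ?_⟩
    rw [Finset.mem_sup] at hmem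
    obtain ⟨T, hT, hxT⟩ := hmem
    have hTf : T ∈ ℱ := Finset.mem_filter.mpr ⟨hT, ⟨x, Finset.mem_inter.mpr ⟨hxT, hx.1⟩⟩⟩
    exact hx.2 (Finset.mem_sup.mpr ⟨T ∩ S, Finset.mem_image_of_mem _ hTf,
      Finset.mem_inter.mpr ⟨hxT, hx.1⟩⟩)
  omega

end Aux

section Key
variable {n : ℕ} (M₁ M₂ : FinMatroid n)

lemma rankD_insert_gt {S : Finset (Fin n)} {e : Fin n} (hM₂ : M₂.Loopless)
    (he : e ∉ S) (hr : M₁.rank S < M₁.rank (insert e S)) :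
    rankD M₁ M₂ S + 1 ≤ rankD M₁ M₂ (insert e S) := by
  obtain ⟨𝒯, hval, heq⟩ := exists_opt M₁ M₂ (insert e S)
  rw [heq]
  by_cases hcov : ∃ T ∈ 𝒯, e ∈ T
  · obtain ⟨T₀, hT₀, heT₀⟩ := hcov
    have hothers : ∀ T ∈ 𝒯.erase T₀, T ⊆ S := by
      intro T hT
      have hne : T ≠ T₀ := Finset.ne_of_mem_erase hT
      have hd := hval.2 T (Finset.mem_of_mem_erase hT) T₀ hT₀ hne
      have hsub : T ⊆ insert e S := (hval.1 T (Finset.mem_of_mem_erase hT)).1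
      intro x hx
      rcases Finset.mem_insert.mp (hsub hx) with rfl | h
      · exact absurd heT₀ (Finset.disjoint_left.mp hd hx)
      · exact h
    by_cases hsingle : (T₀.erase e).Nonempty
    · -- replace T₀ by T₀.erase e
      set 𝒯' : Finset (Finset (Fin n)) := insert (T₀.erase e) (𝒯.erase T₀) with h𝒯'
      have hT₀sub : T₀ ⊆ insert e S := (hval.1 T₀ hT₀).1
      have hT₀S : T₀.erase e ⊆ S := by
        intro x hx
        have hxne : x ≠ e := Finset.ne_of_mem_erase hx
        rcases Finset.mem_insert.mp (hT₀sub (Finset.mem_of_mem_erase hx)) with rfl | h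
        · exact absurd rfl hxne
        · exact h
      have hnotmem : T₀.erase e ∉ 𝒯.erase T₀ := by
        intro hmem
        have hne : T₀.erase e ≠ T₀ := by
          intro h
          rw [← h] at heT₀
          exact Finset.notMem_erase e T₀ heT₀
        have hd := hval.2 (T₀.erase e) (Finset.mem_of_mem_erase hmem) T₀ hT₀ hne
        obtain ⟨x, hx⟩ := hsingle
        exact (Finset.disjoint_left.mp hd hx) (Finset.mem_of_mem_erase hx)
      have hvalid : ValidFamily S 𝒯' := by
        constructor
        · intro T hT
          rcases Finset.mem_insert.mp hT with rfl | h
          · exact ⟨hT₀S, hsingle⟩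
          · exact ⟨hothers T h, (hval.1 T (Finset.mem_of_mem_erase h)).2⟩
        · intro T hT T' hT' hne
          rcases Finset.mem_insert.mp hT with rfl | h <;>
            rcases Finset.mem_insert.mp hT' with rfl | h'
          · exact absurd rfl hne
          · exact Finset.disjoint_of_subset_left (Finset.erase_subset e T₀)
              (hval.2 T₀ hT₀ T' (Finset.mem_of_mem_erase h') (Finset.ne_of_mem_erase h').symm)
          · exact Finset.disjoint_of_subset_right (Finset.erase_subset e T₀)
              (hval.2 T (Finset.mem_of_mem_erase h) T₀ hT₀ (Finset.ne_of_mem_erase h))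
          · exact hval.2 T (Finset.mem_of_mem_erase h) T' (Finset.mem_of_mem_erase h') hne
      have hstep : rankD M₁ M₂ S ≤ famValue M₁ M₂ S 𝒯' := rankD_le M₁ M₂ S hvalid
      -- compare famValues
      have hinsert_erase : insert e (T₀.erase e) = T₀ := Finset.insert_erase heT₀
      have h1 : M₁.rank (T₀.erase e) + 1 ≤ M₁.rank T₀ := by
        have := rank_insert_ge M₁ hT₀S he hr
        rwa [hinsert_erase] at this
      have h2 : M₂.rank (T₀.erase e) ≤ M₂.rank T₀ := M₂.rank_mono (Finset.erase_subset e T₀)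
      have h3 : 1 ≤ M₂.rank (T₀.erase e) := by
        obtain ⟨x, hx⟩ := hsingle
        have := M₂.rank_mono (Finset.singleton_subset_iff.mpr hx)
        have := hM₂ x
        omega
      have hsum1 : ∑ T ∈ 𝒯, (M₁.rank T + M₂.rank T - 1) =
          ∑ T ∈ 𝒯.erase T₀, (M₁.rank T + M₂.rank T - 1) + (M₁.rank T₀ + M₂.rank T₀ - 1) :=
        (Finset.sum_erase_add 𝒯 _ hT₀).symm
      have hsum2 : ∑ T ∈ 𝒯', (M₁.rank T + M₂.rank T - 1) =
          (M₁.rank (T₀.erase e) + M₂.rank (T₀.erase e) - 1) +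
            ∑ T ∈ 𝒯.erase T₀, (M₁.rank T + M₂.rank T - 1) :=
        Finset.sum_insert hnotmem
      have hunc : S \ 𝒯'.sup id = (insert e S) \ 𝒯.sup id := by
        ext x
        simp only [Finset.mem_sdiff, Finset.mem_sup, Finset.mem_insert, h𝒯',
          Finset.sup_insert, Finset.sup_eq_union, Finset.mem_union, id_eq, not_or,
          not_exists, not_and]
        constructor
        · rintro ⟨hxS, hxE, hxO⟩
          refine ⟨Or.inr hxS, fun T hT hxT => ?_⟩
          by_cases hTeq : T = T₀
          · subst hTeq
            rcases Finset.mem_insert.mp ((Finset.insert_erase heT₀).symm ▸ hxT) with rfl | h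
            · exact he hxS
            · exact hxE h
          · exact hxO T (Finset.mem_erase.mpr ⟨hTeq, hT⟩) hxT
        · rintro ⟨rfl | hxS, hxO⟩
          · exact absurd (hxO T₀ hT₀ heT₀) not_false
          · refine ⟨hxS, fun h => hxO T₀ hT₀ (Finset.mem_of_mem_erase h),
              fun T hT hxT => hxO T (Finset.mem_of_mem_erase hT) hxT⟩
      unfold famValue at hstep ⊢
      rw [hunc] at hstep
      omega
    · -- T₀ = {e}
      have hT₀eq : T₀ = {e} := by
        rw [Finset.not_nonempty_iff_eq_empty] at hsingle
        apply Finset.eq_singleton_iff_unique_mem.mpr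
        refine ⟨heT₀, fun x hx => ?_⟩
        by_contra hxe
        exact (Finset.notMem_empty x) (hsingle ▸ Finset.mem_erase.mpr ⟨hxe, hx⟩)
      have hvalid : ValidFamily S (𝒯.erase T₀) := by
        constructor
        · exact fun T hT => ⟨hothers T hT, (hval.1 T (Finset.mem_of_mem_erase hT)).2⟩
        · exact fun T hT T' hT' hne =>
            hval.2 T (Finset.mem_of_mem_erase hT) T' (Finset.mem_of_mem_erase hT') hne
      have hstep : rankD M₁ M₂ S ≤ famValue M₁ M₂ S (𝒯.erase T₀) :=
        rankD_le M₁ M₂ S hvalid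
      have h1 : 1 ≤ M₁.rank {e} := by
        have := rank_insert_ge M₁ (Finset.empty_subset S) he hr
        rw [M₁.rank_empty] at this
        have he2 : insert e (∅ : Finset (Fin n)) = {e} := by simp
        rw [he2] at this
        omega
      have h2 : 1 ≤ M₂.rank {e} := hM₂ e
      have hterm : 1 ≤ M₁.rank T₀ + M₂.rank T₀ - 1 := by rw [hT₀eq]; omega
      have hsum1 : ∑ T ∈ 𝒯, (M₁.rank T + M₂.rank T - 1) =
          ∑ T ∈ 𝒯.erase T₀, (M₁.rank T + M₂.rank T - 1) + (M₁.rank T₀ + M₂.rank T₀ - 1) :=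
        (Finset.sum_erase_add 𝒯 _ hT₀).symm
      have hunc : S \ (𝒯.erase T₀).sup id = (insert e S) \ 𝒯.sup id := by
        ext x
        simp only [Finset.mem_sdiff, Finset.mem_sup, Finset.mem_insert, id_eq,
          not_exists, not_and]
        constructor
        · rintro ⟨hxS, hxO⟩
          refine ⟨Or.inr hxS, fun T hT hxT => ?_⟩
          by_cases hTeq : T = T₀
          · subst hTeq
            rw [hT₀eq] at hxT
            exact he ((Finset.mem_singleton.mp hxT) ▸ hxS)
          · exact hxO T (Finset.mem_erase.mpr ⟨hTeq, hT⟩) hxT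
        · rintro ⟨rfl | hxS, hxO⟩
          · exact absurd (hxO T₀ hT₀ heT₀) not_false
          · exact ⟨hxS, fun T hT hxT => hxO T (Finset.mem_of_mem_erase hT) hxT⟩
      unfold famValue at hstep ⊢
      rw [hunc] at hstep
      omega
  · -- e not covered
    push_neg at hcov
    have hvalid : ValidFamily S 𝒯 := by
      constructor
      · intro T hT
        refine ⟨fun x hx => ?_, (hval.1 T hT).2⟩
        rcases Finset.mem_insert.mp ((hval.1 T hT).1 hx) with rfl | h
        · exact absurd hx (hcov T hT)
        · exact h
      · exact hval.2
    have hstep : rankD M₁ M₂ S ≤ famValue M₁ M₂ S 𝒯 := rankD_le M₁ M₂ S hvalid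
    have hunc : (insert e S) \ 𝒯.sup id = insert e (S \ 𝒯.sup id) := by
      ext x
      simp only [Finset.mem_sdiff, Finset.mem_insert, Finset.mem_sup, id_eq,
        not_exists, not_and]
      constructor
      · rintro ⟨rfl | hxS, hxO⟩
        · exact Or.inl rfl
        · exact Or.inr ⟨hxS, fun T hT hxT => hxO T hT hxT⟩
      · rintro (rfl | ⟨hxS, hxO⟩)
        · exact ⟨Or.inl rfl, fun T hT hxT => (hcov T hT) hxT⟩
        · exact ⟨Or.inr hxS, hxO⟩
    have hcard : ((insert e S) \ 𝒯.sup id).card = (S \ 𝒯.sup id).card + 1 := by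
      rw [hunc, Finset.card_insert_of_notMem (fun h => he (Finset.mem_sdiff.mp h).1)]
    unfold famValue at hstep ⊢
    omega

end Key


open FinMatroid in
/-- If `M₂` has no loops, every spanning set of `D(M₁,M₂)` spans `M₁`. -/
theorem spanningD_spans_left (n : ℕ) (M₁ M₂ : FinMatroid n)
    (hM₂ : M₂.Loopless)
    (S : Finset (Fin n)) (hS : rankD M₁ M₂ S = rankD M₁ M₂ Finset.univ) :
    M₁.rank S = M₁.rk := by
  have hle : M₁.rank S ≤ M₁.rank Finset.univ := M₁.rank_mono (Finset.subset_univ S)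
  rcases eq_or_lt_of_le hle with h | h
  · exact h
  · obtain ⟨e, he, hlt⟩ := exists_insert_rank_lt M₁ S h
    have h1 := rankD_insert_gt M₁ M₂ hM₂ he hlt
    have h2 := rankD_mono M₁ M₂ (Finset.subset_univ (insert e S))
    omega
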